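/- Let n ≥ 3 and 1 ≤ k ≤ n−1 be integers, and let G be a simple connected graph on n vertices with vertex connectivity κ(G) ≤ k. Then Π1(G) ≥ (n−1)^2 with equality if and only if G is isomorphic to the star S_n, and Π2(G) ≥ 4^{n−2} with equality if and only if G is isomorphic to the path P_n. -/

import Mathlib

open SimpleGraph Finset

/-- Degree of a vertex (as `Nat.card` of its neighbor set). -/
noncomputable def mdeg {V : Type*} (G : SimpleGraph V) (v : V) : ℕ :=
  Nat.card (G.neighborSet v)

/-- First multiplicative Zagreb index. -/
noncomputable def mZ1 {V : Type*} [Fintype V] (G : SimpleGraph V) : ℕ :=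
  ∏ v : V, (mdeg G v) ^ 2

/-- Second multiplicative Zagreb index. -/
noncomputable def mZ2 {V : Type*} [Fintype V] (G : SimpleGraph V) : ℕ :=
  ∏ v : V, (mdeg G v) ^ (mdeg G v)

/-- `S` is a vertex cut of `G`: deleting `S` leaves a nonempty disconnected graph. -/
def IsVertexCut {V : Type*} (G : SimpleGraph V) (S : Finset V) : Prop :=
  ((↑S : Set V)ᶜ).Nonempty ∧ ¬ (G.induce ((↑S : Set V)ᶜ)).Connected

/-- The vertex connectivity of `G` is at most `k`: either `G` has a vertex cut of
size at most `k`, or `G` is complete with `n - 1 ≤ k` vertices. -/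
def VertexConnAtMost {V : Type*} [Fintype V] (G : SimpleGraph V) (k : ℕ) : Prop :=
  (∃ S : Finset V, S.card ≤ k ∧ IsVertexCut G S) ∨ (G = ⊤ ∧ Fintype.card V - 1 ≤ k)

/-- The star on `n` vertices, with center `0`. -/
def starGraph (n : ℕ) : SimpleGraph (Fin n) :=
  SimpleGraph.fromRel (fun u _ => u.val = 0)

/-!
Write `d v` for the degrees. Connectedness gives `d v ≥ 1` and at least `n - 1` edges, i.e.
`∑ (d v - 1) ≥ n - 2`.

Since `∏ d v ≥ 1 + ∑ (d v - 1)` for positive integers, `Π₁ = (∏ d v)² ≥ (n - 1)²`; in the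
equality case the product bound is tight, which leaves room for only one vertex of degree `> 1`,
and that vertex is then adjacent to all the others.

Since `d ^ d ≥ 4 ^ (d - 1)`, strictly for `d ≥ 3`, `Π₂ ≥ 4 ^ ∑ (d v - 1) ≥ 4 ^ (n - 2)`; in the
equality case `G` is a tree of maximum degree `2`. A longest path in a connected graph of maximum
degree `2` visits every vertex, and in a tree it then uses every edge, so `G` is a path.
-/

theorem Finset.sum_tsub_one_add_one_le_prod {ι : Type*} (s : Finset ι) {f : ι → ℕ}
    (hf : ∀ i ∈ s, 1 ≤ f i) : ∑ i ∈ s, (f i - 1) + 1 ≤ ∏ i ∈ s, f i := by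
  induction s using Finset.cons_induction with
  | empty => simp
  | cons a s ha ih =>
    rw [sum_cons, prod_cons]
    have ih := ih fun i hi ↦ hf i (mem_cons_of_mem hi)
    obtain ⟨m, hm⟩ : ∃ m, f a = m + 1 := ⟨f a - 1, by have := hf a (mem_cons_self a s); omega⟩
    rw [hm, Nat.add_sub_cancel]
    nlinarith [Nat.mul_le_mul_left m (show 1 ≤ ∏ i ∈ s, f i by omega)]

theorem Finset.forall_eq_one_of_prod_le_sum_tsub_one_add_one {ι : Type*} [DecidableEq ι]
    {s : Finset ι} {f : ι → ℕ} (hf : ∀ i ∈ s, 1 ≤ f i) {c : ι} (hc : c ∈ s) (hfc : 2 ≤ f c)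
    (h : ∏ i ∈ s, f i ≤ ∑ i ∈ s, (f i - 1) + 1) : ∀ i ∈ s, i ≠ c → f i = 1 := by
  have hrest := (s.erase c).sum_tsub_one_add_one_le_prod fun i hi ↦ hf i (mem_of_mem_erase hi)
  rw [← mul_prod_erase s f hc, ← add_sum_erase s _ hc] at h
  have hzero : ∑ i ∈ s.erase c, (f i - 1) = 0 := by
    obtain ⟨m, hm⟩ : ∃ m, f c = m + 2 := ⟨f c - 2, by omega⟩
    rw [hm, show m + 2 - 1 = m + 1 by omega] at h
    apply Nat.eq_zero_of_le_zero
    nlinarith [Nat.mul_le_mul_left (m + 2) hrest]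
  intro i hi hic
  have := (sum_eq_zero_iff.1 hzero) i (mem_erase.2 ⟨hic, hi⟩)
  have := hf i hi
  omega

theorem Nat.four_pow_sub_one_le_self_pow (d : ℕ) : 4 ^ (d - 1) ≤ d ^ d := by
  match d with
  | 0 | 1 | 2 | 3 => norm_num
  | m + 4 =>
    calc 4 ^ (m + 4 - 1) ≤ 4 ^ (m + 4) := Nat.pow_le_pow_right (by norm_num) (by omega)
      _ ≤ (m + 4) ^ (m + 4) := Nat.pow_le_pow_left (by omega) _

theorem Nat.four_pow_sub_one_lt_self_pow {d : ℕ} (hd : 3 ≤ d) : 4 ^ (d - 1) < d ^ d := by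
  match d, hd with
  | 3, _ => norm_num
  | m + 4, _ =>
    calc 4 ^ (m + 4 - 1) < 4 ^ (m + 4) := Nat.pow_lt_pow_right (by norm_num) (by omega)
      _ ≤ (m + 4) ^ (m + 4) := Nat.pow_le_pow_left (by omega) _

theorem Finset.four_pow_sum_tsub_one_le_prod_pow_self {ι : Type*} (s : Finset ι) (f : ι → ℕ) :
    4 ^ ∑ i ∈ s, (f i - 1) ≤ ∏ i ∈ s, f i ^ f i := by
  rw [← prod_pow_eq_pow_sum]
  exact prod_le_prod' fun i _ ↦ Nat.four_pow_sub_one_le_self_pow (f i)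

theorem Finset.le_two_of_prod_pow_self_le_four_pow_sum {ι : Type*} {s : Finset ι} {f : ι → ℕ}
    (h : ∏ i ∈ s, f i ^ f i ≤ 4 ^ ∑ i ∈ s, (f i - 1)) : ∀ i ∈ s, f i ≤ 2 := by
  by_contra! ⟨i, hi, hfi⟩
  rw [← prod_pow_eq_pow_sum] at h
  exact h.not_gt <| prod_lt_prod (fun j _ ↦ by positivity)
    (fun j _ ↦ Nat.four_pow_sub_one_le_self_pow (f j)) ⟨i, hi, Nat.four_pow_sub_one_lt_self_pow hfi⟩

namespace SimpleGraph

variable {V : Type*} {G : SimpleGraph V}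

theorem ncard_neighborSet_eq_degree [Fintype V] [DecidableRel G.Adj] (v : V) :
    (G.neighborSet v).ncard = G.degree v := by
  rw [← Nat.card_coe_set_eq, Nat.card_eq_fintype_card, card_neighborSet_eq_degree]

theorem Connected.sum_degree_tsub_one_add_card [Fintype V] [Nontrivial V] [DecidableRel G.Adj]
    (hG : G.Connected) : ∑ v, (G.degree v - 1) + Fintype.card V = 2 * #G.edgeFinset := by
  rw [← sum_degrees_eq_twice_card_edges, ← card_univ, card_eq_sum_ones, ← sum_add_distrib]
  exact sum_congr rfl fun v _ ↦ Nat.sub_add_cancel (hG.preconnected.degree_pos_of_nontrivial v)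

theorem Connected.card_le_card_edgeFinset_add_one [Fintype V] [Fintype G.edgeSet]
    (hG : G.Connected) : Fintype.card V ≤ #G.edgeFinset + 1 := by
  simpa [Nat.card_eq_fintype_card, edgeFinset_card] using hG.card_vert_le_card_edgeSet_add_one

theorem Connected.card_sub_two_le_sum_degree_tsub_one [Fintype V] [Nontrivial V]
    [DecidableRel G.Adj] (hG : G.Connected) : Fintype.card V - 2 ≤ ∑ v, (G.degree v - 1) := by
  have := hG.sum_degree_tsub_one_add_card
  have := hG.card_le_card_edgeFinset_add_one
  omega

theorem Connected.isTree_of_sum_degree_tsub_one_le [Fintype V] [Nontrivial V]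
    [DecidableRel G.Adj] (hG : G.Connected) (h : ∑ v, (G.degree v - 1) ≤ Fintype.card V - 2) :
    G.IsTree := by
  refine isTree_iff_connected_and_card.2 ⟨hG, ?_⟩
  rw [Nat.card_eq_fintype_card (α := V), Nat.card_eq_card_toFinset]
  change #G.edgeFinset + 1 = _
  have := hG.sum_degree_tsub_one_add_card
  have := hG.card_le_card_edgeFinset_add_one
  have := Fintype.one_lt_card (α := V)
  omega

theorem Connected.exists_isHamiltonian_of_degree_le_two [Fintype V] [DecidableEq V]
    [DecidableRel G.Adj] (hG : G.Connected) (hdeg : ∀ v, G.degree v ≤ 2) :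
    ∃ (u v : V) (p : G.Walk u v), p.IsHamiltonian := by
  obtain ⟨w⟩ := hG.nonempty
  have : Nonempty (Σ u v : V, G.Path u v) := ⟨⟨w, w, Path.nil⟩⟩
  obtain ⟨⟨u, v, p, hp⟩, hmax⟩ :=
    Finite.exists_max fun q : Σ u v : V, G.Path u v ↦ q.2.2.1.length
  have longest {a b : V} (q : G.Walk a b) (hq : q.IsPath) : q.length ≤ p.length :=
    hmax ⟨a, b, q, hq⟩
  refine ⟨u, v, p, hp.isHamiltonian_of_mem fun w ↦ ?_⟩
  by_contra hw
  obtain ⟨⟨⟨x, y⟩, hxy⟩, -, hx, hy⟩ := (hG.preconnected u w).some.exists_boundary_dart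
    {x | x ∈ p.support} p.start_mem_support hw
  simp only [Set.mem_ofPred_eq] at hx hy hxy
  by_cases hxu : x = u
  · subst hxu
    simpa using longest (.cons hxy.symm p) (hp.cons hy)
  by_cases hxv : x = v
  · subst hxv
    simpa using longest (.cons hxy.symm p.reverse) (hp.reverse.cons (by simpa using hy))
  -- `x` is an interior vertex of `p`, so it already has two neighbours on `p`, and `y` is a third.
  obtain ⟨i, rfl, hi⟩ := Walk.mem_support_iff_exists_getVert.1 hx
  have hi0 : i ≠ 0 := by rintro rfl; simp at hxu
  have hil : i < p.length := lt_of_le_of_ne hi (by rintro rfl; simp at hxv)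
  have hsub : insert y (p.toSubgraph.neighborSet (p.getVert i)) ⊆ G.neighborSet (p.getVert i) :=
    Set.insert_subset hxy fun z hz ↦ p.toSubgraph.adj_sub hz
  have hnew : y ∉ p.toSubgraph.neighborSet (p.getVert i) :=
    fun h ↦ hy (Walk.mem_support_of_adj_toSubgraph h.symm)
  have := Set.ncard_le_ncard hsub
  rw [Set.ncard_insert_of_notMem hnew p.finite_neighborSet_toSubgraph,
    hp.ncard_neighborSet_toSubgraph_internal_eq_two hi0 hil, ncard_neighborSet_eq_degree] at this
  linarith [hdeg (p.getVert i)]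

theorem Walk.IsHamiltonian.toSubgraph_eq_top [Fintype V] [DecidableEq V] [Fintype G.edgeSet]
    {u v : V} {p : G.Walk u v} (hp : p.IsHamiltonian) (hE : #G.edgeFinset ≤ p.length) :
    p.toSubgraph = ⊤ := by
  have hedges : p.edges.toFinset = G.edgeFinset := by
    refine Finset.eq_of_subset_of_card_le (fun e he ↦ ?_) ?_
    · exact mem_edgeFinset.2 (p.edges_subset_edgeSet (List.mem_toFinset.1 he))
    · rwa [List.toFinset_card_of_nodup hp.isPath.isTrail.edges_nodup, p.length_edges]
  ext x y
  · simp [Walk.verts_toSubgraph, hp.mem_support]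
  · rw [Walk.adj_toSubgraph_iff_mem_edges, ← List.mem_toFinset, hedges, mem_edgeFinset]
    simp

theorem Walk.IsHamiltonian.nonempty_iso_pathGraph [Fintype V] [DecidableEq V] [Fintype G.edgeSet]
    {u v : V} {p : G.Walk u v} (hp : p.IsHamiltonian) (hE : #G.edgeFinset + 1 = Fintype.card V) :
    Nonempty (G ≃g pathGraph (Fintype.card V)) := by
  have hlen : p.length + 1 = Fintype.card V := by
    have : 0 < Fintype.card V := Fintype.card_pos_iff.2 ⟨u⟩
    rw [hp.length_eq]
    omega
  have e := hp.isPath.pathGraphIsoToSubgraph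
  rw [hp.toSubgraph_eq_top (by omega), hlen] at e
  exact ⟨(e.trans Subgraph.topIso).symm⟩

theorem IsTree.nonempty_iso_pathGraph_of_degree_le_two [Fintype V] [DecidableRel G.Adj]
    (hG : G.IsTree) (hdeg : ∀ v, G.degree v ≤ 2) :
    Nonempty (G ≃g pathGraph (Fintype.card V)) := by
  classical
  obtain ⟨u, v, p, hp⟩ := hG.connected.exists_isHamiltonian_of_degree_le_two hdeg
  exact hp.nonempty_iso_pathGraph hG.card_edgeFinset

theorem eq_starGraph_of_isUniversal [Fintype V] [DecidableRel G.Adj] {c : V}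
    (hc : G.IsUniversal c) (hleaf : ∀ v ≠ c, G.degree v = 1) : G = starGraph c := by
  ext u v
  refine ⟨fun h ↦ starGraph_adj.2 ⟨h.ne, ?_⟩, fun h ↦ ?_⟩
  · by_contra! ⟨hu, hv⟩
    exact hv <| card_le_one.1 (hleaf u hu).le v (by simpa using h) c
      (by simpa using (hc hu.symm).symm)
  · obtain ⟨huv, rfl | rfl⟩ := starGraph_adj.1 h
    · exact hc huv
    · exact (hc huv.symm).symm

theorem nonempty_starGraph_iso_starGraph [DecidableEq V] (c d : V) :
    Nonempty (starGraph c ≃g starGraph d) :=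
  ⟨⟨Equiv.swap c d, fun {u v} ↦ by simp [Equiv.swap_apply_eq_iff]⟩⟩

section pathGraph

variable {m : ℕ} [DecidableRel (pathGraph (m + 2)).Adj]

theorem degree_pathGraph_zero : (pathGraph (m + 2)).degree 0 = 1 := by
  rw [← card_neighborFinset_eq_degree, card_eq_one]
  refine ⟨1, ?_⟩
  ext w
  simp only [mem_neighborFinset, pathGraph_adj, mem_singleton, Fin.ext_iff, Fin.val_zero,
    Fin.val_one]
  omega

theorem degree_pathGraph_last : (pathGraph (m + 2)).degree (Fin.last (m + 1)) = 1 := by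
  rw [← card_neighborFinset_eq_degree, card_eq_one]
  refine ⟨(Fin.last m).castSucc, ?_⟩
  ext w
  simp [pathGraph_adj, Fin.ext_iff]
  omega

theorem degree_pathGraph_castSucc_succ (i : Fin m) :
    (pathGraph (m + 2)).degree i.castSucc.succ = 2 := by
  rw [← card_neighborFinset_eq_degree, card_eq_two]
  refine ⟨i.castSucc.castSucc, i.succ.succ, by simp [Fin.ext_iff]; omega, ?_⟩
  ext w
  simp [pathGraph_adj, Fin.ext_iff]
  omega

end pathGraph

end SimpleGraph

open SimpleGraph

theorem mdeg_eq_degree {V : Type*} [Fintype V] (G : SimpleGraph V) [DecidableRel G.Adj] (v : V) :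
    mdeg G v = G.degree v := by
  rw [mdeg, Nat.card_coe_set_eq, ncard_neighborSet_eq_degree]

theorem mZ1_eq_sq_prod_degree {V : Type*} [Fintype V] (G : SimpleGraph V) [DecidableRel G.Adj] :
    mZ1 G = (∏ v, G.degree v) ^ 2 := by
  simp only [mZ1, mdeg_eq_degree, prod_pow]

theorem mZ2_eq_prod_degree_pow_degree {V : Type*} [Fintype V] (G : SimpleGraph V)
    [DecidableRel G.Adj] : mZ2 G = ∏ v, G.degree v ^ G.degree v := by
  simp only [mZ2, mdeg_eq_degree]

theorem SimpleGraph.Iso.mdeg_eq {V W : Type*} {G : SimpleGraph V} {G' : SimpleGraph W}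
    (e : G ≃g G') (v : V) : mdeg G' (e v) = mdeg G v :=
  (Nat.card_congr (e.mapNeighborSet v)).symm

theorem SimpleGraph.Iso.mZ1_eq {V W : Type*} [Fintype V] [Fintype W] {G : SimpleGraph V}
    {G' : SimpleGraph W} (e : G ≃g G') : mZ1 G = mZ1 G' :=
  Fintype.prod_equiv e.toEquiv _ _ fun v ↦ by simp [e.mdeg_eq]

theorem SimpleGraph.Iso.mZ2_eq {V W : Type*} [Fintype V] [Fintype W] {G : SimpleGraph V}
    {G' : SimpleGraph W} (e : G ≃g G') : mZ2 G = mZ2 G' :=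
  Fintype.prod_equiv e.toEquiv _ _ fun v ↦ by simp [e.mdeg_eq]

theorem starGraph_eq_starGraph_zero {n : ℕ} [NeZero n] :
    _root_.starGraph n = SimpleGraph.starGraph 0 := by
  ext u v
  simp only [_root_.starGraph, SimpleGraph.starGraph, fromRel_adj, Fin.ext_iff, Fin.val_zero]

theorem mZ1_starGraph {n : ℕ} [NeZero n] : mZ1 (_root_.starGraph n) = (n - 1) ^ 2 := by
  classical
  rw [starGraph_eq_starGraph_zero, mZ1_eq_sq_prod_degree,
    Fintype.prod_eq_single 0 fun v hv ↦ degree_starGraph_of_ne_center hv,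
    degree_starGraph_center, Fintype.card_fin]

theorem mZ2_pathGraph {n : ℕ} (hn : 2 ≤ n) : mZ2 (pathGraph n) = 4 ^ (n - 2) := by
  classical
  obtain ⟨m, rfl⟩ := Nat.exists_eq_add_of_le' hn
  rw [mZ2_eq_prod_degree_pow_degree, Fin.prod_univ_succ, Fin.prod_univ_castSucc]
  simp [degree_pathGraph_zero, degree_pathGraph_last, degree_pathGraph_castSucc_succ]

namespace SimpleGraph.Connected

variable {V : Type*} [Fintype V] [Nontrivial V] {G : SimpleGraph V}

theorem card_sub_one_le_prod_degree [DecidableRel G.Adj] (hG : G.Connected) :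
    Fintype.card V - 1 ≤ ∏ v, G.degree v := by
  have := hG.card_sub_two_le_sum_degree_tsub_one
  have := univ.sum_tsub_one_add_one_le_prod fun v _ ↦ hG.preconnected.degree_pos_of_nontrivial v
  omega

theorem sq_card_sub_one_le_mZ1 (hG : G.Connected) : (Fintype.card V - 1) ^ 2 ≤ mZ1 G := by
  classical
  rw [mZ1_eq_sq_prod_degree]
  exact Nat.pow_le_pow_left hG.card_sub_one_le_prod_degree 2

theorem four_pow_card_sub_two_le_mZ2 (hG : G.Connected) : 4 ^ (Fintype.card V - 2) ≤ mZ2 G := by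
  classical
  rw [mZ2_eq_prod_degree_pow_degree]
  exact (Nat.pow_le_pow_right (by norm_num) hG.card_sub_two_le_sum_degree_tsub_one).trans
    (univ.four_pow_sum_tsub_one_le_prod_pow_self _)

theorem nonempty_iso_pathGraph_of_mZ2_eq (hG : G.Connected)
    (h : mZ2 G = 4 ^ (Fintype.card V - 2)) : Nonempty (G ≃g pathGraph (Fintype.card V)) := by
  classical
  rw [mZ2_eq_prod_degree_pow_degree] at h
  have hdeg : ∏ v, G.degree v ^ G.degree v ≤ 4 ^ ∑ v, (G.degree v - 1) :=
    h.le.trans (Nat.pow_le_pow_right (by norm_num) hG.card_sub_two_le_sum_degree_tsub_one)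
  have htree : ∑ v, (G.degree v - 1) ≤ Fintype.card V - 2 :=
    (Nat.pow_le_pow_iff_right (by norm_num)).1
      ((univ.four_pow_sum_tsub_one_le_prod_pow_self _).trans h.le)
  exact (hG.isTree_of_sum_degree_tsub_one_le htree).nonempty_iso_pathGraph_of_degree_le_two
    fun v ↦ le_two_of_prod_pow_self_le_four_pow_sum hdeg v (mem_univ v)

end SimpleGraph.Connected

theorem SimpleGraph.Connected.nonempty_iso_starGraph_of_mZ1_eq {n : ℕ} (hn : 3 ≤ n)
    {G : SimpleGraph (Fin n)} (hG : G.Connected) (h : mZ1 G = (n - 1) ^ 2) :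
    Nonempty (G ≃g _root_.starGraph n) := by
  classical
  have : NeZero n := ⟨by omega⟩
  have : Nontrivial (Fin n) := Fin.nontrivial_iff_two_le.2 (by omega)
  have hpos : ∀ v ∈ univ, 1 ≤ G.degree v := fun v _ ↦ hG.preconnected.degree_pos_of_nontrivial v
  have hsum := hG.card_sub_two_le_sum_degree_tsub_one
  rw [Fintype.card_fin] at hsum
  rw [mZ1_eq_sq_prod_degree] at h
  have hprod : ∏ v, G.degree v = n - 1 := Nat.pow_left_injective two_ne_zero h
  obtain ⟨c, hc⟩ : ∃ c, 2 ≤ G.degree c := by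
    by_contra! hlt
    have : ∑ v, (G.degree v - 1) = 0 := sum_eq_zero fun v _ ↦ by have := hlt v; omega
    omega
  have hleaf : ∀ v ≠ c, G.degree v = 1 := fun v hv ↦
    forall_eq_one_of_prod_le_sum_tsub_one_add_one hpos (mem_univ c) hc (by omega) v (mem_univ v) hv
  have hcenter : G.degree c = Fintype.card (Fin n) - 1 := by
    rw [← Fintype.prod_eq_single c hleaf, hprod, Fintype.card_fin]
  rw [starGraph_eq_starGraph_zero,
    eq_starGraph_of_isUniversal ((degree_eq_card_sub_one _ _).1 hcenter) hleaf]
  exact nonempty_starGraph_iso_starGraph c 0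

theorem stmt4_general (n : ℕ) (hn : 3 ≤ n)
    (G : SimpleGraph (Fin n)) (hG : G.Connected) :
    ((n - 1) ^ 2 ≤ mZ1 G ∧ (mZ1 G = (n - 1) ^ 2 ↔ Nonempty (G ≃g _root_.starGraph n))) ∧
      (4 ^ (n - 2) ≤ mZ2 G ∧
        (mZ2 G = 4 ^ (n - 2) ↔ Nonempty (G ≃g SimpleGraph.pathGraph n))) := by
  have : NeZero n := ⟨by omega⟩
  have : Nontrivial (Fin n) := Fin.nontrivial_iff_two_le.2 (by omega)
  refine ⟨⟨by simpa using hG.sq_card_sub_one_le_mZ1, ?_⟩,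
    ⟨by simpa using hG.four_pow_card_sub_two_le_mZ2, ?_⟩⟩
  · exact ⟨hG.nonempty_iso_starGraph_of_mZ1_eq hn, fun ⟨e⟩ ↦ e.mZ1_eq.trans mZ1_starGraph⟩
  · refine ⟨fun h ↦ ?_, fun ⟨e⟩ ↦ e.mZ2_eq.trans (mZ2_pathGraph (by omega))⟩
    obtain ⟨e⟩ := hG.nonempty_iso_pathGraph_of_mZ2_eq (by rwa [Fintype.card_fin])
    rw [Fintype.card_fin] at e
    exact ⟨e⟩

theorem stmt4 (n k : ℕ) (hn : 3 ≤ n) (hk1 : 1 ≤ k) (hk2 : k ≤ n - 1)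
    (G : SimpleGraph (Fin n)) (hG : G.Connected) (hκ : VertexConnAtMost G k) :
    ((n - 1) ^ 2 ≤ mZ1 G ∧ (mZ1 G = (n - 1) ^ 2 ↔ Nonempty (G ≃g _root_.starGraph n))) ∧
      (4 ^ (n - 2) ≤ mZ2 G ∧
        (mZ2 G = 4 ^ (n - 2) ↔ Nonempty (G ≃g SimpleGraph.pathGraph n))) :=
  stmt4_general n hn G hG
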